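/- Generalized distance inequality: in a convex ball of a metric space with unique constant-speed geodesics where the inequality d(A ♯_{(p−1)/p} B, A ♯_{(p−1)/p} C) ≥ ((p−1)/p) d(B,C) holds for all integers p ≥ 1 and all points A,B,C in the ball, one has d(A ♯_t B, A ♯_t C) ≥ t d(B,C) for every t ∈ [0,1]. -/

import Mathlib

/-- Unique constant-speed geodesics `sharp P Q t = P ♯ₜ Q` inside a convex ball `B` of a
metric space, with the semigroup property and continuity in the parameter. -/
structure SharpFamily (M : Type*) [MetricSpace M] (B : Set M) where
  sharp : M → M → ℝ → M
  sharp_mem : ∀ {P Q : M}, P ∈ B → Q ∈ B → ∀ t ∈ Set.Icc (0 : ℝ) 1, sharp P Q t ∈ B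
  sharp_zero : ∀ P Q : M, sharp P Q 0 = P
  sharp_one : ∀ P Q : M, sharp P Q 1 = Q
  dist_sharp : ∀ {P Q : M}, P ∈ B → Q ∈ B → ∀ t ∈ Set.Icc (0 : ℝ) 1,
    dist P (sharp P Q t) = t * dist P Q
  semigroup : ∀ {P Q : M}, P ∈ B → Q ∈ B → ∀ s ∈ Set.Icc (0 : ℝ) 1,
    ∀ t ∈ Set.Icc (0 : ℝ) 1, sharp P (sharp P Q t) s = sharp P Q (s * t)
  continuous : ∀ {P Q : M}, P ∈ B → Q ∈ B → Continuous fun t : ℝ => sharp P Q t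

/-- Generalized distance inequality: if for all integers `p ≥ 1` and all points of the ball
`d(A ♯_{(p-1)/p} B, A ♯_{(p-1)/p} C) ≥ ((p-1)/p) d(B,C)`, then
`d(A ♯ₜ B, A ♯ₜ C) ≥ t d(B,C)` for every `t ∈ [0,1]`. -/
theorem dist_sharp_ge_t {M : Type*} [MetricSpace M] {B : Set M}
    (G : SharpFamily M B)
    (hstep : ∀ p : ℕ, 1 ≤ p → ∀ A ∈ B, ∀ B' ∈ B, ∀ C ∈ B,
      dist (G.sharp A B' (((p : ℝ) - 1) / p)) (G.sharp A C (((p : ℝ) - 1) / p)) ≥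
        (((p : ℝ) - 1) / p) * dist B' C)
    (A B' C : M) (hA : A ∈ B) (hB : B' ∈ B) (hC : C ∈ B) :
    ∀ t ∈ Set.Icc (0 : ℝ) 1,
      dist (G.sharp A B' t) (G.sharp A C t) ≥ t * dist B' C := by
  -- Step 1: the inequality for all rationals k/p with k ≤ p.
  have key : ∀ p : ℕ, 1 ≤ p → ∀ k : ℕ, k ≤ p →
      dist (G.sharp A B' ((k : ℝ) / p)) (G.sharp A C ((k : ℝ) / p)) ≥
        ((k : ℝ) / p) * dist B' C := by
    intro p hp
    have hp0 : (0 : ℝ) < p := by exact_mod_cast hp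
    suffices h : ∀ d k : ℕ, k + d = p →
        dist (G.sharp A B' ((k : ℝ) / p)) (G.sharp A C ((k : ℝ) / p)) ≥
          ((k : ℝ) / p) * dist B' C by
      intro k hk
      exact h (p - k) k (by omega)
    intro d
    induction d with
    | zero =>
      intro k hk
      have hkp : k = p := by omega
      subst hkp
      have h1 : (k : ℝ) / k = 1 := div_self (by positivity)
      rw [h1, G.sharp_one, G.sharp_one, one_mul]
    | succ d ih =>
      intro k hk
      rcases Nat.eq_zero_or_pos k with h0 | hkpos
      · subst h0
        simpa using dist_nonneg
      · have hk0 : (0 : ℝ) < k := by exact_mod_cast hkpos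
        have hk1p : k + 1 ≤ p := by omega
        have ih' := ih (k + 1) (by omega)
        have hmem : ((k : ℝ) + 1) / p ∈ Set.Icc (0 : ℝ) 1 := by
          constructor
          · positivity
          · rw [div_le_one hp0]; exact_mod_cast hk1p
        have hmem' : (((k : ℕ) + 1 : ℕ) : ℝ) / p ∈ Set.Icc (0 : ℝ) 1 := by push_cast; exact hmem
        have hB'' : G.sharp A B' (((k : ℕ) + 1 : ℕ) / p) ∈ B := G.sharp_mem hA hB _ hmem'
        have hC'' : G.sharp A C (((k : ℕ) + 1 : ℕ) / p) ∈ B := G.sharp_mem hA hC _ hmem'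
        have hs : (k : ℝ) / ((k : ℝ) + 1) ∈ Set.Icc (0 : ℝ) 1 := by
          constructor
          · positivity
          · rw [div_le_one (by positivity)]; linarith
        have e1 : G.sharp A B' ((k : ℝ) / p) =
            G.sharp A (G.sharp A B' ((((k : ℕ) + 1 : ℕ) : ℝ) / p)) ((k : ℝ) / ((k : ℝ) + 1)) := by
          rw [G.semigroup hA hB _ hs _ hmem']
          congr 1
          push_cast
          field_simp
        have e2 : G.sharp A C ((k : ℝ) / p) =
            G.sharp A (G.sharp A C ((((k : ℕ) + 1 : ℕ) : ℝ) / p)) ((k : ℝ) / ((k : ℝ) + 1)) := by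
          rw [G.semigroup hA hC _ hs _ hmem']
          congr 1
          push_cast
          field_simp
        have hstep' := hstep (k + 1) (by omega) A hA _ hB'' _ hC''
        have hc : (((k + 1 : ℕ) : ℝ) - 1) / ((k + 1 : ℕ) : ℝ) = (k : ℝ) / ((k : ℝ) + 1) := by
          push_cast; ring_nf
        rw [hc] at hstep'
        rw [e1, e2]
        calc dist (G.sharp A (G.sharp A B' ((((k : ℕ) + 1 : ℕ) : ℝ) / p)) ((k : ℝ) / ((k : ℝ) + 1)))
              (G.sharp A (G.sharp A C ((((k : ℕ) + 1 : ℕ) : ℝ) / p)) ((k : ℝ) / ((k : ℝ) + 1)))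
            ≥ ((k : ℝ) / ((k : ℝ) + 1)) *
                dist (G.sharp A B' ((((k : ℕ) + 1 : ℕ) : ℝ) / p))
                  (G.sharp A C ((((k : ℕ) + 1 : ℕ) : ℝ) / p)) := hstep'
          _ ≥ ((k : ℝ) / ((k : ℝ) + 1)) * (((((k : ℕ) + 1 : ℕ) : ℝ) / p) * dist B' C) := by
              apply mul_le_mul_of_nonneg_left ih' hs.1
          _ = ((k : ℝ) / p) * dist B' C := by
              push_cast
              field_simp
  -- Step 2: pass to the limit.
  intro t ht
  have hcont : Continuous (fun s : ℝ =>
      dist (G.sharp A B' s) (G.sharp A C s) - s * dist B' C) :=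
    ((G.continuous hA hB).dist (G.continuous hA hC)).sub (continuous_id.mul continuous_const)
  have htend : Filter.Tendsto (fun n : ℕ => (⌊t * n⌋₊ : ℝ) / n) Filter.atTop (nhds t) :=
    (tendsto_nat_floor_mul_div_atTop ht.1).comp tendsto_natCast_atTop_atTop
  have htend2 : Filter.Tendsto (fun n : ℕ =>
      dist (G.sharp A B' ((⌊t * n⌋₊ : ℝ) / n)) (G.sharp A C ((⌊t * n⌋₊ : ℝ) / n))
        - ((⌊t * n⌋₊ : ℝ) / n) * dist B' C) Filter.atTop
      (nhds (dist (G.sharp A B' t) (G.sharp A C t) - t * dist B' C)) :=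
    (hcont.tendsto t).comp htend
  have hge : 0 ≤ dist (G.sharp A B' t) (G.sharp A C t) - t * dist B' C := by
    refine ge_of_tendsto htend2 ?_
    filter_upwards [Filter.eventually_ge_atTop 1] with n hn
    have hkn : ⌊t * n⌋₊ ≤ n := by
      have : t * n ≤ (n : ℝ) := by
        nlinarith [ht.2, Nat.cast_nonneg (α := ℝ) n]
      calc ⌊t * n⌋₊ ≤ ⌊(n : ℝ)⌋₊ := Nat.floor_le_floor this
        _ = n := Nat.floor_natCast n
    have := key n hn ⌊t * n⌋₊ hkn
    linarith
  linarith
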